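/- Let p : ℂⁿ → ℂᴺ be a polynomial map and q : ℂⁿ → ℂ a polynomial with q not identically zero, and suppose ‖p(z)‖² = |q(z)|² for all z ∈ ℂⁿ with ‖z‖ = 1. Let f = p/q on ℂⁿ ∖ q⁻¹(0). Then for every complex affine hyperplane H ⊆ ℂⁿ, the affine hull of f(H ∖ q⁻¹(0)) has dimension at most N−1; that is, k_f ≤ N−1. -/

import Mathlib

noncomputable section

open scoped BigOperators

/-- The annulus `A_{n,r} = { z ∈ ℂⁿ : r < ‖z‖ < 1 }`. -/
def ann (n : ℕ) (r : ℝ) : Set (EuclideanSpace ℂ (Fin n)) :=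
  {z | r < ‖z‖ ∧ ‖z‖ < 1}

/-- `f` is proper as a map from `S` to `T`: preimages (within `S`) of compact subsets
of `T` are compact. -/
def ProperOn {X Y : Type*} [TopologicalSpace X] [TopologicalSpace Y]
    (f : X → Y) (S : Set X) (T : Set Y) : Prop :=
  ∀ K : Set Y, K ⊆ T → IsCompact K → IsCompact (S ∩ f ⁻¹' K)

/-- A proper holomorphic map from `S` to `T`. -/
def IsProperHolo {E F : Type*} [NormedAddCommGroup E] [NormedSpace ℂ E]
    [NormedAddCommGroup F] [NormedSpace ℂ F]
    (f : E → F) (S : Set E) (T : Set F) : Prop :=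
  DifferentiableOn ℂ f S ∧ Set.MapsTo f S T ∧ ProperOn f S T

/-- Dimension of the affine hull (smallest affine subspace containing `S`). -/
def affDim {F : Type*} [NormedAddCommGroup F] [NormedSpace ℂ F] (S : Set F) : ℕ :=
  Module.finrank ℂ (affineSpan ℂ S).direction

/-- The general hyperplane rank `k_f`: the maximum over all complex affine hyperplanes
`H ⊆ ℂⁿ` of the dimension of the affine hull of `f(H ∩ U)`. -/
def genHypRank {n : ℕ} {F : Type*} [NormedAddCommGroup F] [NormedSpace ℂ F]
    (U : Set (EuclideanSpace ℂ (Fin n))) (f : EuclideanSpace ℂ (Fin n) → F) : ℕ :=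
  sSup {k : ℕ | ∃ (a : Fin n → ℂ) (b : ℂ), a ≠ 0 ∧
    k = affDim (f '' ({z | (∑ i, a i * z i) = b} ∩ U))}

/-- Embedding dimension `N_f`: dimension of the affine hull of the image. -/
def embDim {n : ℕ} {F : Type*} [NormedAddCommGroup F] [NormedSpace ℂ F]
    (U : Set (EuclideanSpace ℂ (Fin n))) (f : EuclideanSpace ℂ (Fin n) → F) : ℕ :=
  affDim (f '' U)

/-- Multi-indices `α` on `n` variables with `|α| = d`. -/
abbrev MIdx (n d : ℕ) := {α : Fin n → Fin (d + 1) // ∑ i, (α i : ℕ) = d}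

/-- The homogeneous map `H_d` with components `√(d!/α!)·z^α`, indexed by multi-indices of
degree `d`. -/
def Hd (n d : ℕ) (z : EuclideanSpace ℂ (Fin n)) : EuclideanSpace ℂ (MIdx n d) :=
  WithLp.toLp 2 (fun α : MIdx n d => (Real.sqrt ((d.factorial : ℝ) / ∏ i, ((α.1 i : ℕ).factorial : ℝ)) : ℂ) *
    ∏ i, z i ^ (α.1 i : ℕ))

/-- `(w₁,…,w_m, c, 0, …, 0) ∈ ℂᴺ`. -/
def pad {m : ℕ} (N : ℕ) (w : EuclideanSpace ℂ (Fin m)) (c : ℂ) : EuclideanSpace ℂ (Fin N) :=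
  WithLp.toLp 2 (fun j : Fin N => if h : (j : ℕ) < m then w ⟨j, h⟩ else if (j : ℕ) = m then c else 0)

/-- Evaluate a polynomial at a point of `ℂⁿ`. -/
def evalP {n : ℕ} (q : MvPolynomial (Fin n) ℂ) (z : EuclideanSpace ℂ (Fin n)) : ℂ :=
  MvPolynomial.eval (fun i => z i) q

/-- The rational map `p/q`. -/
def ratMap {n N : ℕ} (p : Fin N → MvPolynomial (Fin n) ℂ) (q : MvPolynomial (Fin n) ℂ)
    (z : EuclideanSpace ℂ (Fin n)) : EuclideanSpace ℂ (Fin N) :=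
  WithLp.toLp 2 (fun j : Fin N => evalP (p j) z / evalP q z)

/-- Unitary equivalence of maps on a set `S`. -/
def UnitarilyEquiv {n N : ℕ} (S : Set (EuclideanSpace ℂ (Fin n)))
    (f g : EuclideanSpace ℂ (Fin n) → EuclideanSpace ℂ (Fin N)) : Prop :=
  ∃ (V : EuclideanSpace ℂ (Fin n) ≃ₗᵢ[ℂ] EuclideanSpace ℂ (Fin n))
    (W : EuclideanSpace ℂ (Fin N) ≃ₗᵢ[ℂ] EuclideanSpace ℂ (Fin N)),
    ∀ z ∈ S, f z = W (g (V z))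


open Complex Polynomial

/-- `g` is a polynomial function. -/
def IsPolyF (g : ℂ → ℂ) : Prop := ∃ P : Polynomial ℂ, ∀ t, g t = P.eval t

/-- `g` is a Laurent-polynomial-like function away from 0. -/
def IsLaurF (g : ℂ → ℂ) : Prop := ∃ (P : Polynomial ℂ) (M : ℕ), ∀ t, t ≠ 0 → g t = P.eval t / t ^ M

lemma IsPolyF.isLaurF {g} (h : IsPolyF g) : IsLaurF g := by
  obtain ⟨P, hP⟩ := h
  exact ⟨P, 0, fun t _ => by simp [hP t]⟩

lemma isPolyF_const (c : ℂ) : IsPolyF (fun _ => c) := ⟨C c, by simp⟩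

lemma isPolyF_id : IsPolyF (fun t => t) := ⟨X, by simp⟩

lemma IsPolyF.add {g h} (hg : IsPolyF g) (hh : IsPolyF h) : IsPolyF (fun t => g t + h t) := by
  obtain ⟨P, hP⟩ := hg; obtain ⟨Q, hQ⟩ := hh
  exact ⟨P + Q, fun t => by simp [hP t, hQ t]⟩

lemma IsPolyF.mul {g h} (hg : IsPolyF g) (hh : IsPolyF h) : IsPolyF (fun t => g t * h t) := by
  obtain ⟨P, hP⟩ := hg; obtain ⟨Q, hQ⟩ := hh
  exact ⟨P * Q, fun t => by simp [hP t, hQ t]⟩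

lemma IsPolyF.sub {g h} (hg : IsPolyF g) (hh : IsPolyF h) : IsPolyF (fun t => g t - h t) := by
  obtain ⟨P, hP⟩ := hg; obtain ⟨Q, hQ⟩ := hh
  exact ⟨P - Q, fun t => by simp [hP t, hQ t]⟩

lemma isLaurF_inv : IsLaurF (fun t => t⁻¹) :=
  ⟨1, 1, fun t ht => by rw [Polynomial.eval_one, pow_one, one_div]⟩

lemma IsLaurF.add {g h} (hg : IsLaurF g) (hh : IsLaurF h) : IsLaurF (fun t => g t + h t) := by
  obtain ⟨P, M, hP⟩ := hg; obtain ⟨Q, M', hQ⟩ := hh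
  refine ⟨P * X ^ M' + X ^ M * Q, M + M', fun t ht => ?_⟩
  show g t + h t = _
  rw [hP t ht, hQ t ht, div_add_div _ _ (pow_ne_zero M ht) (pow_ne_zero M' ht)]
  simp [pow_add]

lemma IsLaurF.mul {g h} (hg : IsLaurF g) (hh : IsLaurF h) : IsLaurF (fun t => g t * h t) := by
  obtain ⟨P, M, hP⟩ := hg; obtain ⟨Q, M', hQ⟩ := hh
  refine ⟨P * Q, M + M', fun t ht => ?_⟩
  show g t * h t = _
  rw [hP t ht, hQ t ht, div_mul_div_comm]
  simp [pow_add]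

lemma IsLaurF.sub {g h} (hg : IsLaurF g) (hh : IsLaurF h) : IsLaurF (fun t => g t - h t) := by
  obtain ⟨P, M, hP⟩ := hg; obtain ⟨Q, M', hQ⟩ := hh
  refine ⟨P * X ^ M' - X ^ M * Q, M + M', fun t ht => ?_⟩
  show g t - h t = _
  rw [hP t ht, hQ t ht, div_sub_div _ _ (pow_ne_zero M ht) (pow_ne_zero M' ht)]
  simp [pow_add]

lemma IsPolyF.finsetSum {ι : Type*} (s : Finset ι) (f : ι → ℂ → ℂ)
    (h : ∀ i ∈ s, IsPolyF (f i)) : IsPolyF (fun t => ∑ i ∈ s, f i t) := by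
  classical
  induction s using Finset.induction_on with
  | empty => simpa using isPolyF_const 0
  | insert _ _ hni ih =>
    rename_i a s'
    simp only [Finset.sum_insert hni]
    exact (h a (Finset.mem_insert_self a s')).add
      (ih fun i hi => h i (Finset.mem_insert_of_mem hi))

lemma IsLaurF.finsetSum {ι : Type*} (s : Finset ι) (f : ι → ℂ → ℂ)
    (h : ∀ i ∈ s, IsLaurF (f i)) : IsLaurF (fun t => ∑ i ∈ s, f i t) := by
  classical
  induction s using Finset.induction_on with
  | empty => simpa using (isPolyF_const 0).isLaurF
  | insert _ _ hni ih =>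
    rename_i a s'
    simp only [Finset.sum_insert hni]
    exact (h a (Finset.mem_insert_self a s')).add
      (ih fun i hi => h i (Finset.mem_insert_of_mem hi))

lemma IsPolyF.mvEval {n : ℕ} (r : MvPolynomial (Fin n) ℂ) (g : Fin n → ℂ → ℂ)
    (hg : ∀ i, IsPolyF (g i)) :
    IsPolyF (fun t => MvPolynomial.eval (fun i => g i t) r) := by
  induction r using MvPolynomial.induction_on with
  | C a => simpa using isPolyF_const a
  | add r1 r2 h1 h2 => simp only [map_add]; exact h1.add h2
  | mul_X r i h => simp only [map_mul, MvPolynomial.eval_X]; exact h.mul (hg i)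

lemma IsLaurF.mvEval {n : ℕ} (r : MvPolynomial (Fin n) ℂ) (g : Fin n → ℂ → ℂ)
    (hg : ∀ i, IsLaurF (g i)) :
    IsLaurF (fun t => MvPolynomial.eval (fun i => g i t) r) := by
  induction r using MvPolynomial.induction_on with
  | C a => simpa using (isPolyF_const a).isLaurF
  | add r1 r2 h1 h2 => simp only [map_add]; exact h1.add h2
  | mul_X r i h => simp only [map_mul, MvPolynomial.eval_X]; exact h.mul (hg i)

/-- A polynomial function vanishing on an injective sequence vanishes everywhere. -/
lemma IsPolyF.eq_zero {g} (hg : IsPolyF g) (f : ℕ → ℂ) (hf : Function.Injective f)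
    (hz : ∀ m, g (f m) = 0) : ∀ t, g t = 0 := by
  obtain ⟨P, hP⟩ := hg
  have hPz : P = 0 := by
    apply Polynomial.eq_zero_of_infinite_isRoot
    apply Set.infinite_of_injective_forall_mem hf
    intro m
    simpa [Polynomial.IsRoot, ← hP (f m)] using hz m
  intro t; simp [hP t, hPz]

/-- A Laurent-like function vanishing on an injective nonzero sequence vanishes off 0. -/
lemma IsLaurF.eq_zero {g} (hg : IsLaurF g) (f : ℕ → ℂ) (hf : Function.Injective f)
    (hf0 : ∀ m, f m ≠ 0) (hz : ∀ m, g (f m) = 0) : ∀ t, t ≠ 0 → g t = 0 := by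
  obtain ⟨P, M, hP⟩ := hg
  have hPz : P = 0 := by
    apply Polynomial.eq_zero_of_infinite_isRoot
    apply Set.infinite_of_injective_forall_mem hf
    intro m
    have h1 := hP (f m) (hf0 m)
    rw [hz m] at h1
    rcases div_eq_zero_iff.mp h1.symm with h2 | h2
    · exact h2
    · exact absurd h2 (pow_ne_zero M (hf0 m))
  intro t ht; simp [hP t ht, hPz]

lemma continuous_mvEval {n : ℕ} (r : MvPolynomial (Fin n) ℂ) :
    Continuous (fun z : Fin n → ℂ => MvPolynomial.eval z r) := by
  induction r using MvPolynomial.induction_on with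
  | C a => simpa using continuous_const
  | add r1 r2 h1 h2 => simp only [map_add]; exact h1.add h2
  | mul_X r i h => simp only [map_mul, MvPolynomial.eval_X]; exact h.mul (continuous_apply i)

/-- conj of unit modulus is inverse-/
lemma conj_eq_inv_of_normSq_one {s : ℂ} (h : Complex.normSq s = 1) :
    (starRingEnd ℂ) s = s⁻¹ := by
  have h1 : s * (starRingEnd ℂ) s = 1 := by rw [Complex.mul_conj, h]; simp
  exact eq_inv_of_mul_eq_one_right h1

/-- rational points on the unit circle -/
def circleSeq (m : ℕ) : ℂ :=
  ⟨((m : ℝ) ^ 2 - 1) / ((m : ℝ) ^ 2 + 1), 2 * (m : ℝ) / ((m : ℝ) ^ 2 + 1)⟩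

lemma circleSeq_normSq (m : ℕ) : Complex.normSq (circleSeq m) = 1 := by
  have hpos : (0:ℝ) < (m : ℝ) ^ 2 + 1 := by positivity
  rw [circleSeq, Complex.normSq_mk]
  field_simp
  ring

lemma circleSeq_injective : Function.Injective circleSeq := by
  have hmono : StrictMono (fun m : ℕ => ((m : ℝ) ^ 2 - 1) / ((m : ℝ) ^ 2 + 1)) := by
    intro a b hab
    have ha : (0:ℝ) < (a : ℝ) ^ 2 + 1 := by positivity
    have hb : (0:ℝ) < (b : ℝ) ^ 2 + 1 := by positivity
    rw [div_lt_div_iff₀ ha hb]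
    have : (a : ℝ) < (b : ℝ) := by exact_mod_cast hab
    have h0 : (0:ℝ) ≤ (a:ℝ) := Nat.cast_nonneg a
    nlinarith
  intro a b hab
  have : ((a : ℝ) ^ 2 - 1) / ((a : ℝ) ^ 2 + 1) = ((b : ℝ) ^ 2 - 1) / ((b : ℝ) ^ 2 + 1) :=
    congrArg Complex.re hab
  exact hmono.injective this

/-- real sequences give injective complex sequences -/
lemma ofReal_seq_injective (x : ℕ → ℝ) (hx : Function.Injective x) :
    Function.Injective (fun m => (x m : ℂ)) := by
  intro a b hab
  simp only [Complex.ofReal_inj] at hab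
  exact hx hab

lemma one_div_add_two_injective : Function.Injective (fun m : ℕ => 1 / ((m : ℝ) + 2)) := by
  intro a b hab
  have ha : (0:ℝ) < (a:ℝ) + 2 := by positivity
  have hb : (0:ℝ) < (b:ℝ) + 2 := by positivity
  field_simp at hab
  exact_mod_cast (by linarith : (a:ℝ) = (b:ℝ))


section PhiSec
variable {n N : ℕ} (p : Fin N → MvPolynomial (Fin n) ℂ) (q : MvPolynomial (Fin n) ℂ)

def Phi (z w : Fin n → ℂ) : ℂ :=
  (∑ j, MvPolynomial.eval z (p j) *
      MvPolynomial.eval w (MvPolynomial.map (starRingEnd ℂ) (p j))) -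
    MvPolynomial.eval z q * MvPolynomial.eval w (MvPolynomial.map (starRingEnd ℂ) q)

lemma eval_map_conj (r : MvPolynomial (Fin n) ℂ) (w : Fin n → ℂ) :
    MvPolynomial.eval w (MvPolynomial.map (starRingEnd ℂ) r) =
      (starRingEnd ℂ) (MvPolynomial.eval (fun i => (starRingEnd ℂ) (w i)) r) := by
  have h := MvPolynomial.eval₂_comp_left (starRingEnd ℂ) (RingHom.id ℂ)
    (fun i => (starRingEnd ℂ) (w i)) r
  have e1 : MvPolynomial.eval (fun i => (starRingEnd ℂ) (w i)) r =
      MvPolynomial.eval₂ (RingHom.id ℂ) (fun i => (starRingEnd ℂ) (w i)) r := rfl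
  have e2 : (starRingEnd ℂ).comp (RingHom.id ℂ) = starRingEnd ℂ := RingHom.comp_id _
  have e3 : ((starRingEnd ℂ) ∘ fun i => (starRingEnd ℂ) (w i)) = w := by
    funext i; exact Complex.conj_conj (w i)
  rw [e2, e3] at h
  rw [MvPolynomial.eval_map, e1, h]

lemma eval_map_conj' (r : MvPolynomial (Fin n) ℂ) (x : Fin n → ℂ) :
    MvPolynomial.eval (fun i => (starRingEnd ℂ) (x i)) (MvPolynomial.map (starRingEnd ℂ) r) =
      (starRingEnd ℂ) (MvPolynomial.eval x r) := by
  rw [eval_map_conj]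
  have e : (fun i => (starRingEnd ℂ) ((starRingEnd ℂ) (x i))) = x := by
    funext i; exact Complex.conj_conj (x i)
  rw [e]

lemma Phi_sphere
    (hsph : ∀ z : EuclideanSpace ℂ (Fin n), ‖z‖ = 1 →
      ∑ j, ‖evalP (p j) z‖ ^ 2 = ‖evalP q z‖ ^ 2)
    (x : EuclideanSpace ℂ (Fin n)) (hx : ‖x‖ = 1) :
    Phi p q x (fun i => (starRingEnd ℂ) (x i)) = 0 := by
  have h2 : ∀ t : ℂ, t * (starRingEnd ℂ) t = ((‖t‖ ^ 2 : ℝ) : ℂ) := by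
    intro t
    rw [Complex.mul_conj, Complex.sq_norm]
  have hs := hsph x hx
  simp only [evalP] at hs
  have hexp : ∀ r : MvPolynomial (Fin n) ℂ, MvPolynomial.eval (fun i => x i) r
      = MvPolynomial.eval (x : Fin n → ℂ) r := fun r => rfl
  unfold Phi
  rw [show (MvPolynomial.eval (fun i => (starRingEnd ℂ) (x i))
      (MvPolynomial.map (starRingEnd ℂ) q)) = (starRingEnd ℂ) (MvPolynomial.eval x q) from
    eval_map_conj' q x]
  have : ∀ j, MvPolynomial.eval (fun i => (starRingEnd ℂ) (x i))
      (MvPolynomial.map (starRingEnd ℂ) (p j)) = (starRingEnd ℂ) (MvPolynomial.eval x (p j)) :=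
    fun j => eval_map_conj' (p j) x
  simp only [this, h2]
  rw [← Complex.ofReal_sum]
  simp only [hexp] at hs
  rw [hs, sub_self]

lemma isLaurF_phi (zf wf : Fin n → ℂ → ℂ) (hz : ∀ i, IsLaurF (zf i))
    (hw : ∀ i, IsLaurF (wf i)) :
    IsLaurF (fun s => Phi p q (fun i => zf i s) (fun i => wf i s)) := by
  unfold Phi
  refine IsLaurF.sub ?_ ((IsLaurF.mvEval _ _ hz).mul (IsLaurF.mvEval _ _ hw))
  exact IsLaurF.finsetSum _ _ fun j _ =>
    (IsLaurF.mvEval _ _ hz).mul (IsLaurF.mvEval _ _ hw)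

lemma isPolyF_phi (zf wf : Fin n → ℂ → ℂ) (hz : ∀ i, IsPolyF (zf i))
    (hw : ∀ i, IsPolyF (wf i)) :
    IsPolyF (fun s => Phi p q (fun i => zf i s) (fun i => wf i s)) := by
  unfold Phi
  refine IsPolyF.sub ?_ ((IsPolyF.mvEval _ _ hz).mul (IsPolyF.mvEval _ _ hw))
  exact IsPolyF.finsetSum _ _ fun j _ =>
    (IsPolyF.mvEval _ _ hz).mul (IsPolyF.mvEval _ _ hw)

variable (hsph : ∀ z : EuclideanSpace ℂ (Fin n), ‖z‖ = 1 →
      ∑ j, ‖evalP (p j) z‖ ^ 2 = ‖evalP q z‖ ^ 2)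

include hsph

/-- Torus polarization: `Φ(t ⊙ x, x̄ ⊘ t) = 0` for unit `x` and nonvanishing `t`. -/
lemma Phi_torus : ∀ (k : ℕ) (x : EuclideanSpace ℂ (Fin n)), ‖x‖ = 1 → ∀ t : Fin n → ℂ,
    (∀ i, t i ≠ 0) → (∀ i : Fin n, k ≤ (i : ℕ) → t i = 1) →
    Phi p q (fun i => t i * x i) (fun i => (starRingEnd ℂ) (x i) / t i) = 0 := by
  intro k
  induction k with
  | zero =>
    intro x hx t ht h1
    have e1 : (fun i => t i * x i) = (x : Fin n → ℂ) :=
      funext fun i => by rw [h1 i (Nat.zero_le _), one_mul]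
    have e2 : (fun i => (starRingEnd ℂ) (x i) / t i) =
        (fun i => (starRingEnd ℂ) (x i)) :=
      funext fun i => by rw [h1 i (Nat.zero_le _), div_one]
    rw [e1, e2]
    exact Phi_sphere p q hsph x hx
  | succ k ih =>
    intro x hx t ht h1
    by_cases hk : k < n
    · set i₀ : Fin n := ⟨k, hk⟩ with hi₀
      set g : ℂ → ℂ := fun s => Phi p q (fun i => Function.update t i₀ s i * x i)
          (fun i => (starRingEnd ℂ) (x i) / Function.update t i₀ s i) with hg
      have hLaur : IsLaurF g := by
        apply isLaurF_phi
        · intro i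
          by_cases hii : i = i₀
          · have e : (fun s => Function.update t i₀ s i * x i) = fun s => s * x i := by
              funext s; rw [hii, Function.update_self]
            rw [e]
            exact (isPolyF_id.mul (isPolyF_const (x i))).isLaurF
          · have e : (fun s => Function.update t i₀ s i * x i) = fun _ => t i * x i := by
              funext s; rw [Function.update_of_ne hii]
            rw [e]
            exact (isPolyF_const _).isLaurF
        · intro i
          by_cases hii : i = i₀
          · have e : (fun s => (starRingEnd ℂ) (x i) / Function.update t i₀ s i) =
                fun s => (starRingEnd ℂ) (x i) * s⁻¹ := by
              funext s; rw [hii, Function.update_self, div_eq_mul_inv]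
            rw [e]
            exact (isPolyF_const _).isLaurF.mul isLaurF_inv
          · have e : (fun s => (starRingEnd ℂ) (x i) / Function.update t i₀ s i) =
                fun _ => (starRingEnd ℂ) (x i) / t i := by
              funext s; rw [Function.update_of_ne hii]
            rw [e]
            exact (isPolyF_const _).isLaurF
      have hknown : ∀ m : ℕ, g (circleSeq m) = 0 := by
        intro m
        set s : ℂ := circleSeq m with hs
        have hns : Complex.normSq s = 1 := circleSeq_normSq m
        have hsne : s ≠ 0 := by
          intro h0
          rw [h0] at hns; simp at hns
        have hnorm_s : ‖s‖ = 1 := by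
          have h2 : ‖s‖ ^ 2 = 1 := by
            rw [Complex.sq_norm, hns]
          nlinarith [norm_nonneg s]
        set x' : EuclideanSpace ℂ (Fin n) := WithLp.toLp 2 (Function.update (x : Fin n → ℂ) i₀ (s * x i₀))
          with hx'
        have hx'norm : ‖x'‖ = 1 := by
          rw [EuclideanSpace.norm_eq] at hx ⊢
          have : ∀ i, ‖x' i‖ ^ 2 = ‖x i‖ ^ 2 := by
            intro i
            by_cases hii : i = i₀
            · subst hii
              rw [hx', WithLp.ofLp_toLp, Function.update_self, norm_mul, hnorm_s, one_mul]
            · rw [hx', WithLp.ofLp_toLp, Function.update_of_ne hii]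
          rw [Finset.sum_congr rfl fun i _ => this i]
          exact hx
        set t'' : Fin n → ℂ := Function.update t i₀ 1 with ht''
        have ht''ne : ∀ i, t'' i ≠ 0 := by
          intro i
          by_cases hii : i = i₀
          · subst hii; rw [ht'', Function.update_self]; exact one_ne_zero
          · rw [ht'', Function.update_of_ne hii]; exact ht i
        have ht''1 : ∀ i : Fin n, k ≤ (i : ℕ) → t'' i = 1 := by
          intro i hi
          by_cases hii : i = i₀
          · subst hii; rw [ht'', Function.update_self]
          · rw [ht'', Function.update_of_ne hii]
            apply h1
            have : (i : ℕ) ≠ k := fun h => hii (Fin.ext h)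
            omega
        have happ := ih x' hx'norm t'' ht''ne ht''1
        have e1 : (fun i => t'' i * x' i) = fun i => Function.update t i₀ s i * x i := by
          funext i
          by_cases hii : i = i₀
          · subst hii
            rw [ht'', hx', WithLp.ofLp_toLp, Function.update_self, Function.update_self,
              Function.update_self, one_mul]
          · rw [ht'', hx', WithLp.ofLp_toLp, Function.update_of_ne hii, Function.update_of_ne hii,
              Function.update_of_ne hii]
        have e2 : (fun i => (starRingEnd ℂ) (x' i) / t'' i) =
            fun i => (starRingEnd ℂ) (x i) / Function.update t i₀ s i := by
          funext i
          by_cases hii : i = i₀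
          · subst hii
            rw [ht'', hx', WithLp.ofLp_toLp, Function.update_self, Function.update_self,
              Function.update_self, div_one, map_mul,
              conj_eq_inv_of_normSq_one hns, mul_comm, ← div_eq_mul_inv]
          · rw [ht'', hx', WithLp.ofLp_toLp, Function.update_of_ne hii, Function.update_of_ne hii,
              Function.update_of_ne hii]
        rw [e1, e2] at happ
        exact happ
      have hcne : ∀ m : ℕ, circleSeq m ≠ 0 := by
        intro m h0
        have := circleSeq_normSq m
        rw [h0] at this; simp at this
      have hzero := hLaur.eq_zero circleSeq circleSeq_injective hcne hknown
      have hfin := hzero (t i₀) (ht i₀)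
      rw [hg] at hfin
      simp only [Function.update_eq_self] at hfin
      exact hfin
    · apply ih x hx t ht
      intro i hi
      exact absurd (lt_of_le_of_lt hi i.isLt) (by omega)

lemma Phi_posreal (z w : Fin n → ℂ) (hz : ∀ i, z i ≠ 0)
    (hpos : ∀ i, ∃ r : ℝ, 0 < r ∧ z i * w i = (r : ℂ))
    (hsum : (∑ i, z i * w i) = 1) : Phi p q z w = 0 := by
  choose r hr hzw using hpos
  set x : EuclideanSpace ℂ (Fin n) := WithLp.toLp 2 (fun i => ((Real.sqrt (r i) : ℝ) : ℂ)) with hxdef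
  have hsqrtpos : ∀ i, 0 < Real.sqrt (r i) := fun i => Real.sqrt_pos.mpr (hr i)
  have hxne : ∀ i, x i ≠ 0 := fun i => by
    simp only [hxdef, WithLp.ofLp_toLp, ne_eq, Complex.ofReal_eq_zero]
    exact ne_of_gt (hsqrtpos i)
  have hrsum : (∑ i, (r i : ℂ)) = 1 := by
    rw [← hsum]; exact Finset.sum_congr rfl fun i _ => (hzw i).symm
  have hrsumR : (∑ i, r i) = 1 := by
    have := hrsum
    rw [← Complex.ofReal_sum] at this
    exact_mod_cast this
  have hxnorm : ‖x‖ = 1 := by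
    rw [EuclideanSpace.norm_eq]
    have : ∀ i, ‖x i‖ ^ 2 = r i := by
      intro i
      rw [hxdef]
      simp only [WithLp.ofLp_toLp, Complex.norm_real, Real.norm_eq_abs]
      rw [_root_.abs_of_nonneg (Real.sqrt_nonneg _), Real.sq_sqrt (le_of_lt (hr i))]
    rw [Finset.sum_congr rfl fun i _ => this i, hrsumR, Real.sqrt_one]
  set t : Fin n → ℂ := fun i => z i / x i with htdef
  have htne : ∀ i, t i ≠ 0 := fun i => div_ne_zero (hz i) (hxne i)
  have happ := Phi_torus p q hsph n x hxnorm t htne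
    (fun i hi => absurd (lt_of_le_of_lt hi i.isLt) (lt_irrefl n))
  have e1 : (fun i => t i * x i) = z := by
    funext i
    rw [htdef]
    exact div_mul_cancel₀ (z i) (hxne i)
  have e2 : (fun i => (starRingEnd ℂ) (x i) / t i) = w := by
    funext i
    rw [htdef, hxdef]
    simp only [WithLp.ofLp_toLp, Complex.conj_ofReal]
    rw [div_div_eq_mul_div, ← Complex.ofReal_mul, Real.mul_self_sqrt (le_of_lt (hr i))]
    rw [eq_comm, eq_div_iff (hz i), mul_comm, ← hzw i, mul_comm]
  rw [e1, e2] at happ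
  exact happ

omit hsph in
lemma isPolyF_affine (a b : ℂ) : IsPolyF (fun κ => a + κ * b) :=
  (isPolyF_const a).add (isPolyF_id.mul (isPolyF_const b))

omit hsph in
lemma natCastShift_injective (c : ℂ) :
    Function.Injective (fun m : ℕ => ((((m : ℝ) + 1 : ℝ)) : ℂ) - c) := by
  intro a b hab
  simp only [sub_left_inj, Complex.ofReal_inj, add_left_inj] at hab
  exact_mod_cast hab

lemma Phi_chain : ∀ (k : ℕ) (z w : Fin n → ℂ), (∀ i, z i ≠ 0) → (∑ i, z i * w i) = 1 →
    (∀ i : Fin n, k ≤ (i : ℕ) → ∃ r : ℝ, 0 < r ∧ z i * w i = (r : ℂ)) →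
    Phi p q z w = 0 := by
  intro k
  induction k with
  | zero =>
    intro z w hz hsum hpos
    exact Phi_posreal p q hsph z w hz (fun i => hpos i (Nat.zero_le _)) hsum
  | succ k ih =>
    intro z w hz hsum hpos
    by_cases hk : k < n
    · set i₀ : Fin n := ⟨k, hk⟩ with hi₀def
      by_cases hk0 : k = 0
      · subst hk0
        by_cases hall : ∀ i : Fin n, i = i₀
        · apply Phi_posreal p q hsph z w hz _ hsum
          have hone : z i₀ * w i₀ = 1 := by
            rw [← hsum]
            exact (Finset.sum_eq_single_of_mem (f := fun i => z i * w i) i₀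
              (Finset.mem_univ _) (fun j _ hj => absurd (hall j) hj)).symm
          intro i
          rw [hall i]
          exact ⟨1, one_pos, by rw [hone]; norm_num⟩
        · have hge : ∀ i : Fin n, i ≠ i₀ → 1 ≤ (i : ℕ) := by
            intro i hi
            rcases Nat.eq_zero_or_pos (i : ℕ) with h | h
            · exact absurd (Fin.ext h) hi
            · exact h
          set r : Fin n → ℝ := fun i =>
            if h : 1 ≤ (i : ℕ) then (hpos i h).choose else 1 with hrdef
          have hrspec : ∀ i : Fin n, i ≠ i₀ → 0 < r i ∧ z i * w i = (r i : ℂ) := by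
            intro i hi
            have h1 := hge i hi
            rw [hrdef]
            simp only [dif_pos h1]
            exact (hpos i h1).choose_spec
          set T : Finset (Fin n) := Finset.univ.erase i₀ with hTdef
          have hTmem : ∀ i, i ∈ T ↔ i ≠ i₀ := by
            intro i
            rw [hTdef, Finset.mem_erase]
            simp
          have hTne : T.Nonempty := by
            obtain ⟨j, hj⟩ := not_forall.mp hall
            exact ⟨j, (hTmem j).mpr hj⟩
          set S' : ℝ := ∑ i ∈ T, r i with hS'def
          have hS'pos : 0 < S' := by
            apply Finset.sum_pos _ hTne
            intro i hi
            exact (hrspec i ((hTmem i).mp hi)).1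
          have hS'ne : (S' : ℂ) ≠ 0 := by
            simp only [ne_eq, Complex.ofReal_eq_zero]
            exact ne_of_gt hS'pos
          have hsplit : z i₀ * w i₀ + (S' : ℂ) = 1 := by
            rw [← hsum, hS'def, Complex.ofReal_sum,
              ← Finset.add_sum_erase _ _ (Finset.mem_univ i₀)]
            congr 1
            exact Finset.sum_congr rfl fun i hi =>
              ((hrspec i ((hTmem i).mp hi)).2).symm
          set wf : Fin n → ℂ → ℂ := fun i κ =>
            if i = i₀ then w i₀ + κ * (z i₀)⁻¹ else w i * (1 - κ / (S' : ℂ)) with hwf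
          set g : ℂ → ℂ := fun κ => Phi p q z (fun i => wf i κ) with hgdef
          have hgpoly : IsPolyF g := by
            apply isPolyF_phi
            · exact fun i => isPolyF_const (z i)
            · intro i
              by_cases hii : i = i₀
              · have e : wf i = fun κ => w i₀ + κ * (z i₀)⁻¹ := by
                  funext κ; rw [hwf]; simp only [if_pos hii]
                rw [e]; exact isPolyF_affine _ _
              · have e : wf i = fun κ => w i + κ * (-(w i) / (S' : ℂ)) := by
                  funext κ; rw [hwf]; simp only [if_neg hii]
                  field_simp; ring
                rw [e]; exact isPolyF_affine _ _
          have hterm0 : ∀ κ : ℂ, z i₀ * wf i₀ κ = z i₀ * w i₀ + κ := by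
            intro κ
            rw [hwf]; simp only [if_pos rfl, ↓reduceIte]
            field_simp [hz i₀]
          have htermT : ∀ (κ : ℂ) (i : Fin n), i ≠ i₀ →
              z i * wf i κ = (r i : ℂ) * (1 - κ / (S' : ℂ)) := by
            intro κ i hi
            rw [hwf]; simp only [if_neg hi]
            rw [← mul_assoc, (hrspec i hi).2]
          have hsums : ∀ κ : ℂ, (∑ i, z i * wf i κ) = 1 := by
            intro κ
            rw [← Finset.add_sum_erase _ _ (Finset.mem_univ i₀), hterm0 κ]
            have : ∑ i ∈ Finset.univ.erase i₀, z i * wf i κ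
                = (S' : ℂ) * (1 - κ / (S' : ℂ)) := by
              rw [Finset.sum_congr rfl (fun i hi => htermT κ i ((hTmem i).mp hi)),
                ← Finset.sum_mul, hS'def, Complex.ofReal_sum]
            rw [this]
            field_simp
            linear_combination hsplit
          have hknown : ∀ m : ℕ, g (((S' - 1 + 1 / ((m : ℝ) + 2) : ℝ)) : ℂ) = 0 := by
            intro m
            set κR : ℝ := S' - 1 + 1 / ((m : ℝ) + 2) with hκR
            have hm2 : (0:ℝ) < (m : ℝ) + 2 := by positivity
            apply ih z (fun i => wf i (κR : ℂ)) hz (hsums _)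
            intro i _
            by_cases hii : i = i₀
            · refine ⟨1 / ((m : ℝ) + 2), by positivity, ?_⟩
              rw [hii, hterm0]
              have : z i₀ * w i₀ = 1 - (S' : ℂ) := by linear_combination hsplit
              rw [this, hκR]
              push_cast
              ring
            · refine ⟨r i * (1 - κR / S'), ?_, ?_⟩
              · apply mul_pos (hrspec i hii).1
                rw [hκR]
                have h1 : 1 / ((m : ℝ) + 2) < 1 := by
                  rw [div_lt_one hm2]; linarith
                have h2 : (S' - 1 + 1 / ((m : ℝ) + 2)) / S' < 1 := by
                  rw [div_lt_one hS'pos]; linarith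
                linarith
              · rw [htermT _ i hii]
                push_cast
                ring
          have hginj : Function.Injective
              (fun m : ℕ => (((S' - 1 + 1 / ((m : ℝ) + 2) : ℝ)) : ℂ)) := by
            intro a b hab
            simp only [Complex.ofReal_inj, add_right_inj] at hab
            exact one_div_add_two_injective hab
          have hgzero := hgpoly.eq_zero _ hginj hknown
          have hfin : Phi p q z (fun i => wf i 0) = 0 := hgzero 0
          have e0 : (fun i => wf i 0) = w := by
            funext i
            simp only [hwf]
            by_cases hii : i = i₀
            · rw [if_pos hii, hii]; ring
            · rw [if_neg hii]; ring
          rw [e0] at hfin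
          exact hfin
      · -- k ≥ 1 : compensate with index 0
        have hn0 : 0 < n := lt_of_le_of_lt (Nat.zero_le _) hk
        set j₀ : Fin n := ⟨0, hn0⟩ with hj₀def
        have hji : j₀ ≠ i₀ := by
          intro h
          have := congrArg Fin.val h
          simp [hj₀def, hi₀def] at this
          omega
        set c : ℂ := z i₀ * w i₀ with hcdef
        set wf : Fin n → ℂ → ℂ := fun i κ =>
          if i = i₀ then w i₀ + κ * (z i₀)⁻¹
          else if i = j₀ then w j₀ - κ * (z j₀)⁻¹ else w i with hwf
        set g : ℂ → ℂ := fun κ => Phi p q z (fun i => wf i κ) with hgdef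
        have hgpoly : IsPolyF g := by
          apply isPolyF_phi
          · exact fun i => isPolyF_const (z i)
          · intro i
            by_cases hii : i = i₀
            · have e : wf i = fun κ => w i₀ + κ * (z i₀)⁻¹ := by
                funext κ; rw [hwf]; simp only [if_pos hii]
              rw [e]; exact isPolyF_affine _ _
            · by_cases hij : i = j₀
              · have e : wf i = fun κ => w j₀ + κ * (-(z j₀)⁻¹) := by
                  funext κ; rw [hwf]; simp only [if_neg hii, if_pos hij]; ring
                rw [e]; exact isPolyF_affine _ _
              · have e : wf i = fun κ => w i + κ * 0 := by
                  funext κ; rw [hwf]; simp only [if_neg hii, if_neg hij]; ring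
                rw [e]; exact isPolyF_affine _ _
        have hterm : ∀ (κ : ℂ) (i : Fin n), z i * wf i κ =
            z i * w i + ((if i = i₀ then κ else 0) + (if i = j₀ then -κ else 0)) := by
          intro κ i
          rw [hwf]
          by_cases hii : i = i₀
          · have hij : i ≠ j₀ := fun h => hji (by rw [← h, hii])
            simp only [if_pos hii, if_neg hij]
            rw [hii]
            field_simp [hz i₀]
            ring
          · by_cases hij : i = j₀
            · simp only [if_neg hii, if_pos hij]
              rw [hij]
              field_simp [hz j₀]
              ring
            · simp only [if_neg hii, if_neg hij]
              ring
        have hsums : ∀ κ : ℂ, (∑ i, z i * wf i κ) = 1 := by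
          intro κ
          rw [Finset.sum_congr rfl fun i _ => hterm κ i, Finset.sum_add_distrib,
            Finset.sum_add_distrib, hsum,
            Finset.sum_ite_eq' Finset.univ i₀ (fun _ => κ),
            Finset.sum_ite_eq' Finset.univ j₀ (fun _ => -κ)]
          simp
        have hknown : ∀ m : ℕ,
            g (((((m : ℝ) + 1 : ℝ)) : ℂ) - c) = 0 := by
          intro m
          set κ : ℂ := ((((m : ℝ) + 1 : ℝ)) : ℂ) - c with hκ
          apply ih z (fun i => wf i κ) hz (hsums κ)
          intro i hi
          by_cases hii : i = i₀
          · refine ⟨(m : ℝ) + 1, by positivity, ?_⟩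
            have hij : i ≠ j₀ := fun h => hji (by rw [← h, hii])
            have : z i * wf i κ = z i * w i + κ := by
              rw [hterm κ i, if_pos hii, if_neg hij]
              ring
            rw [this, hii, ← hcdef, hκ]
            ring
          · have hij : i ≠ j₀ := by
              intro h
              rw [h, hj₀def] at hi
              simp at hi
              omega
            have : z i * wf i κ = z i * w i := by
              rw [hterm κ i, if_neg hii, if_neg hij]
              ring
            rw [this]
            have hival : k + 1 ≤ (i : ℕ) := by
              rcases Nat.lt_or_ge (i : ℕ) (k + 1) with h | h
              · have : (i : ℕ) = k := by omega
                exact absurd (Fin.ext this) hii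
              · exact h
            exact hpos i hival
        have hgzero := hgpoly.eq_zero _ (natCastShift_injective c) hknown
        have hfin : Phi p q z (fun i => wf i 0) = 0 := hgzero 0
        have e0 : (fun i => wf i 0) = w := by
          funext i
          simp only [hwf]
          by_cases hii : i = i₀
          · rw [if_pos hii, hii]; ring
          · rw [if_neg hii]
            by_cases hij : i = j₀
            · rw [if_pos hij, hij]; ring
            · rw [if_neg hij]
        rw [e0] at hfin
        exact hfin
    · apply ih z w hz hsum
      intro i hi
      exact absurd (lt_of_le_of_lt hi i.isLt) (by omega)

omit hsph in
lemma IsPolyF.eq_zero_of_infinite {g : ℂ → ℂ} (hg : IsPolyF g) {S : Set ℂ}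
    (hS : S.Infinite) (hz : ∀ s ∈ S, g s = 0) : ∀ t, g t = 0 := by
  obtain ⟨P, hP⟩ := hg
  have hPz : P = 0 := by
    apply Polynomial.eq_zero_of_infinite_isRoot
    apply hS.mono
    intro s hs
    simpa [Polynomial.IsRoot, ← hP s] using hz s hs
  intro t; simp [hP t, hPz]

/-- Full polarization: `Φ(z,w) = 0` whenever `∑ zᵢwᵢ = 1`. -/
lemma Phi_polarized (z w : Fin n → ℂ) (hsum : (∑ i, z i * w i) = 1) :
    Phi p q z w = 0 := by
  classical
  set σ : ℂ := ∑ i, (if z i = 0 then (1 : ℂ) else 0) * w i with hσ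
  set v : Fin n → ℂ := fun i => (if z i = 0 then (1 : ℂ) else 0) - σ * z i with hv
  have hvw : (∑ i, v i * w i) = 0 := by
    simp only [hv, sub_mul, Finset.sum_sub_distrib]
    rw [← hσ]
    have : ∑ i, σ * z i * w i = σ * ∑ i, z i * w i := by
      rw [Finset.mul_sum]
      exact Finset.sum_congr rfl fun i _ => by ring
    rw [this, hsum, mul_one, sub_self]
  set zf : Fin n → ℂ → ℂ := fun i κ => z i + κ * v i with hzf
  have hsumκ : ∀ κ : ℂ, (∑ i, zf i κ * w i) = 1 := by
    intro κ
    simp only [hzf, add_mul]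
    rw [Finset.sum_add_distrib, hsum]
    have : ∑ i, κ * v i * w i = κ * ∑ i, v i * w i := by
      rw [Finset.mul_sum]
      exact Finset.sum_congr rfl fun i _ => by ring
    rw [this, hvw, mul_zero, add_zero]
  have hgpoly : IsPolyF (fun κ => Phi p q (fun i => zf i κ) w) := by
    apply isPolyF_phi
    · intro i; exact isPolyF_affine (z i) (v i)
    · intro i; exact isPolyF_const (w i)
  set B : Set ℂ := {0} ∪ {κ | 1 - κ * σ = 0} with hB
  have hBfin : B.Finite := by
    apply (Set.finite_singleton (0 : ℂ)).union
    by_cases hσ0 : σ = 0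
    · have : {κ : ℂ | 1 - κ * σ = 0} = ∅ := by
        ext κ; simp [hσ0]
      rw [this]; exact Set.finite_empty
    · apply Set.Finite.subset (Set.finite_singleton σ⁻¹)
      intro κ hκ
      simp only [Set.mem_setOf_eq] at hκ
      have : κ * σ = 1 := by linear_combination -hκ
      simp only [Set.mem_singleton_iff]
      field_simp
      linear_combination this
  have hknown : ∀ s ∈ Bᶜ, Phi p q (fun i => zf i s) w = 0 := by
    intro κ hκ
    simp only [hB, Set.mem_compl_iff, Set.mem_union, Set.mem_singleton_iff,
      Set.mem_setOf_eq, not_or] at hκ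
    obtain ⟨hκ0, hκσ⟩ := hκ
    apply Phi_chain p q hsph n (fun i => zf i κ) w _ (hsumκ κ)
    · intro i hi
      exact absurd (lt_of_le_of_lt hi i.isLt) (lt_irrefl n)
    · intro i
      simp only [hzf, hv]
      by_cases hzi : z i = 0
      · simp only [if_pos hzi, hzi]
        simpa using hκ0
      · simp only [if_neg hzi]
        have : z i + κ * (0 - σ * z i) = z i * (1 - κ * σ) := by ring
        rw [this]
        exact mul_ne_zero hzi hκσ
  have hall := hgpoly.eq_zero_of_infinite (hBfin.infinite_compl) hknown
  have hfin := hall 0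
  have e0 : (fun i => zf i 0) = z := by
    funext i; simp [hzf]
  rw [e0] at hfin
  exact hfin

omit hsph in
lemma exists_good_data (hq : q ≠ 0) (a : Fin n → ℂ) (ha : a ≠ 0) (b : ℂ) (m : ℕ) :
    ∃ (α : Fin n → ℂ) (β : ℂ), β ≠ 0 ∧ α ≠ 0 ∧
      (∀ i, ‖α i - a i‖ ≤ 1 / ((m : ℝ) + 1)) ∧ ‖β - b‖ ≤ 1 / ((m : ℝ) + 1) ∧
      MvPolynomial.eval (fun i => α i / β)
        (MvPolynomial.map (starRingEnd ℂ) q) ≠ 0 := by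
  classical
  set qbar := MvPolynomial.map (starRingEnd ℂ) q with hqbardef
  have hqbar : qbar ≠ 0 := by
    intro h
    apply hq
    apply MvPolynomial.map_injective (starRingEnd ℂ) (RingHom.injective _)
    rw [map_zero, ← hqbardef]
    exact h
  have hζ : ∃ ζ : Fin n → ℂ, MvPolynomial.eval ζ qbar ≠ 0 := by
    by_contra h
    push_neg at h
    exact hqbar (MvPolynomial.funext fun x => by rw [h x, map_zero])
  obtain ⟨ζ, hζne⟩ := hζ
  have hm1 : (0:ℝ) < (m : ℝ) + 1 := by positivity
  set β : ℂ := if b = 0 then ((1 / ((m : ℝ) + 1) : ℝ) : ℂ) else b with hβdef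
  have hβne : β ≠ 0 := by
    rw [hβdef]
    by_cases hb : b = 0
    · simp only [if_pos hb, ne_eq, Complex.ofReal_eq_zero]
      positivity
    · simpa only [if_neg hb] using hb
  have hβbd : ‖β - b‖ ≤ 1 / ((m : ℝ) + 1) := by
    rw [hβdef]
    by_cases hb : b = 0
    · rw [if_pos hb, hb, sub_zero, Complex.norm_real, Real.norm_eq_abs,
        _root_.abs_of_nonneg (by positivity : (0:ℝ) ≤ 1 / ((m:ℝ)+1))]
    · rw [if_neg hb, sub_self, norm_zero]
      positivity
  obtain ⟨i₀, hi₀⟩ := Function.ne_iff.mp ha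
  simp only [Pi.zero_apply] at hi₀
  set d : Fin n → ℂ := fun i => β * ζ i - a i with hddef
  set K : ℝ := (∑ i, ‖d i‖) + 1 with hKdef
  have hKpos : 0 < K := by
    rw [hKdef]
    have : (0:ℝ) ≤ ∑ i, ‖d i‖ := Finset.sum_nonneg fun i _ => norm_nonneg _
    linarith
  have hdK : ∀ i, ‖d i‖ ≤ K := by
    intro i
    rw [hKdef]
    have h1 : ‖d i‖ ≤ ∑ i, ‖d i‖ :=
      Finset.single_le_sum (fun i _ => norm_nonneg (d i)) (Finset.mem_univ i)
    linarith
  set δ : ℝ := 1 / (((m : ℝ) + 1) * K) with hδdef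
  have hδpos : 0 < δ := by rw [hδdef]; positivity
  set g : ℂ → ℂ := fun ε => MvPolynomial.eval (fun i => (a i + ε * d i) / β) qbar with hgdef
  have hgp : IsPolyF g := by
    rw [hgdef]
    refine IsPolyF.mvEval qbar (fun i ε => (a i + ε * d i) / β) (fun i => ?_)
    show IsPolyF fun ε : ℂ => (a i + ε * d i) / β
    have e : (fun ε : ℂ => (a i + ε * d i) / β) = fun ε => a i / β + ε * (d i / β) := by
      funext ε; ring
    rw [e]
    exact isPolyF_affine _ _
  have hg1 : g 1 ≠ 0 := by
    have e : (fun i => (a i + 1 * d i) / β) = ζ := by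
      funext i
      rw [hddef]
      field_simp
      ring
    show MvPolynomial.eval (fun i => (a i + 1 * d i) / β) qbar ≠ 0
    rw [e]
    exact hζne
  obtain ⟨P, hP⟩ := hgp
  have hPne : P ≠ 0 := fun h => hg1 (by rw [hP 1, h, Polynomial.eval_zero])
  set Paff : Polynomial ℂ :=
    Polynomial.C (a i₀) + Polynomial.X * Polynomial.C (d i₀) with hPaffdef
  have hPaffev : ∀ ε : ℂ, Paff.eval ε = a i₀ + ε * d i₀ := by
    intro ε
    rw [hPaffdef]
    rw [Polynomial.eval_add, Polynomial.eval_C, Polynomial.eval_mul,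
      Polynomial.eval_X, Polynomial.eval_C]
  have hPaffne : Paff ≠ 0 := by
    intro h
    have h0 := hPaffev 0
    rw [h, Polynomial.eval_zero] at h0
    simp only [zero_mul, add_zero] at h0
    exact hi₀ h0.symm
  set G : Polynomial ℂ := P * Paff with hGdef
  have hGne : G ≠ 0 := mul_ne_zero hPne hPaffne
  have hroots : {x : ℂ | G.IsRoot x}.Finite := Polynomial.finite_setOf_isRoot hGne
  have hδne : δ ≠ 0 := ne_of_gt hδpos
  have hinj : Function.Injective (fun k : ℕ => ((δ / ((k : ℝ) + 2) : ℝ) : ℂ)) := by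
    intro s t hst
    simp only [Complex.ofReal_inj] at hst
    have hs : (0:ℝ) < (s:ℝ) + 2 := by positivity
    have ht : (0:ℝ) < (t:ℝ) + 2 := by positivity
    rw [div_eq_div_iff (ne_of_gt hs) (ne_of_gt ht)] at hst
    have h2 : (t:ℝ) + 2 = (s:ℝ) + 2 := mul_left_cancel₀ hδne hst
    have h3 : (t:ℝ) = (s:ℝ) := by linarith
    exact_mod_cast h3.symm
  have hmem : ∀ k : ℕ, ((δ / ((k : ℝ) + 2) : ℝ) : ℂ) ∈ {ε : ℂ | ‖ε‖ ≤ δ} := by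
    intro k
    simp only [Set.mem_setOf_eq, Complex.norm_real, Real.norm_eq_abs]
    have hk2 : (1:ℝ) ≤ (k:ℝ) + 2 := by linarith [Nat.cast_nonneg (α := ℝ) k]
    rw [_root_.abs_of_nonneg (by positivity)]
    exact div_le_self (le_of_lt hδpos) hk2
  have hinf : {ε : ℂ | ‖ε‖ ≤ δ}.Infinite :=
    Set.infinite_of_injective_forall_mem hinj hmem
  obtain ⟨ε, hεball, hεroot⟩ := (hinf.diff hroots).nonempty
  have hGeval : G.eval ε ≠ 0 := hεroot
  rw [hGdef, Polynomial.eval_mul] at hGeval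
  have hPev : P.eval ε ≠ 0 := fun h => hGeval (by rw [h, zero_mul])
  have hPaffev' : Paff.eval ε ≠ 0 := fun h => hGeval (by rw [h, mul_zero])
  refine ⟨fun i => a i + ε * d i, β, hβne, ?_, ?_, hβbd, ?_⟩
  · intro h0
    apply hPaffev'
    rw [hPaffev ε]
    exact congrFun h0 i₀
  · intro i
    simp only [add_sub_cancel_left, norm_mul]
    have hεδ : ‖ε‖ ≤ δ := hεball
    calc ‖ε‖ * ‖d i‖ ≤ δ * K :=
          mul_le_mul hεδ (hdK i) (norm_nonneg _) (le_of_lt hδpos)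
      _ = 1 / ((m : ℝ) + 1) := by
          rw [hδdef, div_mul_eq_mul_div, one_mul, mul_comm ((m:ℝ)+1) K, ← div_div,
            div_self (ne_of_gt hKpos)]
  · have : MvPolynomial.eval (fun i => (a i + ε * d i) / β) qbar = g ε := by
      rw [hgdef]
    rw [this, hP ε]
    exact hPev

open Filter Topology in
lemma hyperplane_relation (hq : q ≠ 0) (a : Fin n → ℂ) (ha : a ≠ 0) (b : ℂ) :
    ∃ (c : Fin N → ℂ) (c₀ : ℂ), ¬(c = 0 ∧ c₀ = 0) ∧
      ∀ z : Fin n → ℂ, (∑ i, a i * z i) = b →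
        (∑ j, c j * MvPolynomial.eval z (p j)) = c₀ * MvPolynomial.eval z q := by
  classical
  have hgood := fun m => exists_good_data (q := q) hq a ha b m
  choose αs βs hβne hαne hαbd hβbd heval using hgood
  set wseq : ℕ → Fin n → ℂ := fun m i => αs m i / βs m with hwseqdef
  set γ : ℕ → (Fin N → ℂ) × ℂ := fun m =>
    (fun j => MvPolynomial.eval (wseq m) (MvPolynomial.map (starRingEnd ℂ) (p j)),
     MvPolynomial.eval (wseq m) (MvPolynomial.map (starRingEnd ℂ) q)) with hγdef
  have hγ2 : ∀ m, (γ m).2 = MvPolynomial.eval (wseq m)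
      (MvPolynomial.map (starRingEnd ℂ) q) := fun m => rfl
  have hγne : ∀ m, γ m ≠ 0 := by
    intro m h
    apply heval m
    have h2 := congrArg Prod.snd h
    rw [hγ2 m] at h2
    simpa [hwseqdef] using h2
  set ρ : ℕ → ℝ := fun m => ‖γ m‖ with hρdef
  have hρpos : ∀ m, 0 < ρ m := fun m => norm_pos_iff.mpr (hγne m)
  set v : ℕ → (Fin N → ℂ) × ℂ := fun m => (ρ m)⁻¹ • γ m with hvdef
  have hvmem : ∀ m, v m ∈ Metric.sphere (0 : (Fin N → ℂ) × ℂ) 1 := by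
    intro m
    rw [mem_sphere_zero_iff_norm, hvdef]
    show ‖(ρ m)⁻¹ • γ m‖ = 1
    rw [norm_smul, Real.norm_eq_abs, _root_.abs_of_pos (inv_pos.mpr (hρpos m))]
    exact inv_mul_cancel₀ (ne_of_gt (hρpos m))
  have hrel : ∀ m (z : Fin n → ℂ), (∑ i, αs m i * z i) = βs m →
      (∑ j, (γ m).1 j * MvPolynomial.eval z (p j)) =
        (γ m).2 * MvPolynomial.eval z q := by
    intro m z hzm
    have hws : (∑ i, z i * wseq m i) = 1 := by
      have e : ∀ i, z i * wseq m i = (αs m i * z i) / βs m := fun i => by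
        simp only [hwseqdef]; ring
      rw [Finset.sum_congr rfl fun i _ => e i, ← Finset.sum_div, hzm,
        div_self (hβne m)]
    have h0 := Phi_polarized p q hsph z (wseq m) hws
    unfold Phi at h0
    have h1 := sub_eq_zero.mp h0
    calc (∑ j, (γ m).1 j * MvPolynomial.eval z (p j))
        = ∑ j, MvPolynomial.eval z (p j) * (γ m).1 j :=
          Finset.sum_congr rfl fun j _ => by ring
      _ = MvPolynomial.eval z q * (γ m).2 := h1
      _ = (γ m).2 * MvPolynomial.eval z q := by ring
  have hvrel : ∀ m (z : Fin n → ℂ), (∑ i, αs m i * z i) = βs m →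
      (∑ j, (v m).1 j * MvPolynomial.eval z (p j)) =
        (v m).2 * MvPolynomial.eval z q := by
    intro m z hzm
    have h1 := hrel m z hzm
    have hv1 : ∀ j, (v m).1 j = (((ρ m)⁻¹ : ℝ) : ℂ) * (γ m).1 j := by
      intro j
      show ((ρ m)⁻¹ • γ m).1 j = _
      rw [Prod.smul_fst, Pi.smul_apply, Complex.real_smul]
    have hv2 : (v m).2 = (((ρ m)⁻¹ : ℝ) : ℂ) * (γ m).2 := by
      show ((ρ m)⁻¹ • γ m).2 = _
      rw [Prod.smul_snd, Complex.real_smul]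
    have e : ∀ j, (v m).1 j * MvPolynomial.eval z (p j) =
        (((ρ m)⁻¹ : ℝ) : ℂ) * ((γ m).1 j * MvPolynomial.eval z (p j)) := by
      intro j; rw [hv1 j]; ring
    rw [Finset.sum_congr rfl fun j _ => e j, ← Finset.mul_sum, h1, hv2]
    ring
  obtain ⟨cl, hclmem, φ, hφ, hφtend⟩ := (isCompact_sphere
    (0 : (Fin N → ℂ) × ℂ) 1).tendsto_subseq hvmem
  refine ⟨cl.1, cl.2, ?_, ?_⟩
  · rintro ⟨h1, h2⟩
    have hcl0 : cl = 0 := Prod.ext h1 h2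
    rw [mem_sphere_zero_iff_norm, hcl0, norm_zero] at hclmem
    exact one_ne_zero hclmem.symm
  · intro z hz
    have hαtend : ∀ i, Tendsto (fun m => αs m i) atTop (𝓝 (a i)) := by
      intro i
      have hd : Tendsto (fun m => αs m i - a i) atTop (𝓝 0) :=
        squeeze_zero_norm (fun m => hαbd m i) tendsto_one_div_add_atTop_nhds_zero_nat
      have := hd.add_const (a i)
      simpa using this
    have hβtend : Tendsto βs atTop (𝓝 b) := by
      have hd : Tendsto (fun m => βs m - b) atTop (𝓝 0) :=
        squeeze_zero_norm (fun m => hβbd m) tendsto_one_div_add_atTop_nhds_zero_nat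
      have := hd.add_const b
      simpa using this
    set A : ℕ → ℂ := fun m => ∑ i, αs m i * (starRingEnd ℂ) (αs m i) with hAdef
    have hAreal : ∀ (α : Fin n → ℂ),
        (∑ i, α i * (starRingEnd ℂ) (α i)) = ((∑ i, Complex.normSq (α i) : ℝ) : ℂ) := by
      intro α
      rw [Complex.ofReal_sum]
      exact Finset.sum_congr rfl fun i _ => Complex.mul_conj (α i)
    have hAne' : ∀ (α : Fin n → ℂ), α ≠ 0 →
        (∑ i, α i * (starRingEnd ℂ) (α i)) ≠ 0 := by
      intro α hα
      rw [hAreal α]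
      simp only [ne_eq, Complex.ofReal_eq_zero]
      obtain ⟨i1, hi1⟩ := Function.ne_iff.mp hα
      simp only [Pi.zero_apply] at hi1
      have : 0 < ∑ i, Complex.normSq (α i) :=
        Finset.sum_pos' (fun i _ => Complex.normSq_nonneg _)
          ⟨i1, Finset.mem_univ _, Complex.normSq_pos.mpr hi1⟩
      exact ne_of_gt this
    have hAne : ∀ m, A m ≠ 0 := fun m => hAne' (αs m) (hαne m)
    set Alim : ℂ := ∑ i, a i * (starRingEnd ℂ) (a i) with hAlimdef
    have hAlimne : Alim ≠ 0 := hAne' a ha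
    have hAtend : Tendsto A atTop (𝓝 Alim) := by
      apply tendsto_finset_sum
      intro i _
      exact (hαtend i).mul ((Complex.continuous_conj.tendsto _).comp (hαtend i))
    set zs : ℕ → Fin n → ℂ := fun m i =>
      z i + (βs m - ∑ k, αs m k * z k) * ((starRingEnd ℂ) (αs m i) / A m) with hzsdef
    have hzsmem : ∀ m, (∑ i, αs m i * zs m i) = βs m := by
      intro m
      have e : ∀ i, αs m i * zs m i = αs m i * z i +
          ((βs m - ∑ k, αs m k * z k) / A m) * (αs m i * (starRingEnd ℂ) (αs m i)) :=
        fun i => by simp only [hzsdef]; ring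
      rw [Finset.sum_congr rfl fun i _ => e i, Finset.sum_add_distrib, ← Finset.mul_sum]
      have hAm : (∑ i, αs m i * (starRingEnd ℂ) (αs m i)) = A m := rfl
      rw [hAm, div_mul_cancel₀ _ (hAne m)]
      ring
    have hzstend : Tendsto zs atTop (𝓝 z) := by
      rw [tendsto_pi_nhds]
      intro i
      have hbig : Tendsto (fun m => zs m i) atTop
          (𝓝 (z i + (b - ∑ k, a k * z k) * ((starRingEnd ℂ) (a i) / Alim))) := by
        apply Tendsto.add tendsto_const_nhds
        apply Tendsto.mul
        · exact hβtend.sub (tendsto_finset_sum _ fun k _ =>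
            (hαtend k).mul tendsto_const_nhds)
        · exact ((Complex.continuous_conj.tendsto _).comp (hαtend i)).div hAtend hAlimne
      have : z i + (b - ∑ k, a k * z k) * ((starRingEnd ℂ) (a i) / Alim) = z i := by
        rw [hz, sub_self, zero_mul, add_zero]
      rwa [this] at hbig
    have hφt : Tendsto φ atTop atTop := hφ.tendsto_atTop
    have hzsφ : Tendsto (fun m => zs (φ m)) atTop (𝓝 z) := hzstend.comp hφt
    have hv1tend : ∀ j, Tendsto (fun m => (v (φ m)).1 j) atTop (𝓝 (cl.1 j)) :=
      fun j => (((continuous_apply j).comp continuous_fst).tendsto cl).comp hφtend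
    have hv2tend : Tendsto (fun m => (v (φ m)).2) atTop (𝓝 cl.2) :=
      (continuous_snd.tendsto cl).comp hφtend
    have hL : Tendsto (fun m => ∑ j, (v (φ m)).1 j *
        MvPolynomial.eval (zs (φ m)) (p j)) atTop
        (𝓝 (∑ j, cl.1 j * MvPolynomial.eval z (p j))) := by
      apply tendsto_finset_sum
      intro j _
      exact (hv1tend j).mul (((continuous_mvEval (p j)).tendsto z).comp hzsφ)
    have hR : Tendsto (fun m => (v (φ m)).2 * MvPolynomial.eval (zs (φ m)) q) atTop
        (𝓝 (cl.2 * MvPolynomial.eval z q)) :=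
      hv2tend.mul (((continuous_mvEval q).tendsto z).comp hzsφ)
    have heqseq : (fun m => ∑ j, (v (φ m)).1 j * MvPolynomial.eval (zs (φ m)) (p j)) =
        fun m => (v (φ m)).2 * MvPolynomial.eval (zs (φ m)) q :=
      funext fun m => hvrel (φ m) (zs (φ m)) (hzsmem (φ m))
    rw [heqseq] at hL
    exact tendsto_nhds_unique hL hR

end PhiSec

lemma affDim_le_of_linear {N : ℕ} (c1 : Fin N → ℂ) (hc1 : c1 ≠ 0) (c₀ : ℂ)
    (S : Set (EuclideanSpace ℂ (Fin N))) (hS : ∀ u ∈ S, (∑ j, c1 j * u j) = c₀) :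
    affDim S ≤ N - 1 := by
  classical
  set φ : EuclideanSpace ℂ (Fin N) →ₗ[ℂ] ℂ :=
    { toFun := fun u => ∑ j, c1 j * u j
      map_add' := fun u v => by
        simp only [PiLp.add_apply, mul_add, Finset.sum_add_distrib]
      map_smul' := fun s u => by
        simp only [PiLp.smul_apply, smul_eq_mul, RingHom.id_apply, Finset.mul_sum]
        exact Finset.sum_congr rfl fun j _ => by ring } with hφdef
  obtain ⟨j0, hj0⟩ := Function.ne_iff.mp hc1
  simp only [Pi.zero_apply] at hj0
  have hsurj : Function.Surjective φ := by
    intro y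
    refine ⟨(y / c1 j0) • EuclideanSpace.single j0 1, ?_⟩
    show (∑ j, c1 j * ((y / c1 j0) • EuclideanSpace.single j0 (1:ℂ)) j) = y
    have e : ∀ j, c1 j * ((y / c1 j0) • EuclideanSpace.single j0 (1:ℂ)) j =
        if j = j0 then c1 j * (y / c1 j0) else 0 := by
      intro j
      rw [PiLp.smul_apply, EuclideanSpace.single_apply, smul_eq_mul]
      by_cases hj : j = j0
      · rw [if_pos hj, if_pos hj, mul_one]
      · rw [if_neg hj, if_neg hj, mul_zero, mul_zero]
    rw [Finset.sum_congr rfl fun j _ => e j, Finset.sum_ite_eq' Finset.univ j0]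
    simp only [Finset.mem_univ, if_true]
    field_simp
  have hrange : LinearMap.range φ = ⊤ := LinearMap.range_eq_top.mpr hsurj
  have hrank := LinearMap.finrank_range_add_finrank_ker φ
  rw [hrange, finrank_top, Module.finrank_self, finrank_euclideanSpace_fin] at hrank
  have hdir : (affineSpan ℂ S).direction ≤ LinearMap.ker φ := by
    rw [direction_affineSpan, vectorSpan_def]
    apply Submodule.span_le.mpr
    rintro v ⟨u, hu, u', hu', rfl⟩
    simp only [SetLike.mem_coe, LinearMap.mem_ker, vsub_eq_sub]
    rw [map_sub]
    have h1 : φ u = c₀ := hS u hu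
    have h2 : φ u' = c₀ := hS u' hu'
    rw [h1, h2, sub_self]
  have hmono : Module.finrank ℂ (affineSpan ℂ S).direction ≤
      Module.finrank ℂ (LinearMap.ker φ) := Submodule.finrank_mono hdir
  have : affDim S = Module.finrank ℂ (affineSpan ℂ S).direction := rfl
  omega


/-- **Rational sphere maps have `k_f ≤ N−1`.** If `f = p/q` is a rational map with
`‖p(z)‖² = |q(z)|²` on the unit sphere, then for every complex affine hyperplane `H`
the affine hull of `f(H ∖ q⁻¹(0))` has dimension at most `N−1`. -/
theorem rational_sphere_map_hyperplane_rank (n N : ℕ)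
    (p : Fin N → MvPolynomial (Fin n) ℂ) (q : MvPolynomial (Fin n) ℂ) (hq : q ≠ 0)
    (hsph : ∀ z : EuclideanSpace ℂ (Fin n), ‖z‖ = 1 →
      ∑ j, ‖evalP (p j) z‖ ^ 2 = ‖evalP q z‖ ^ 2) :
    ∀ a : Fin n → ℂ, a ≠ 0 → ∀ b : ℂ,
      affDim (ratMap p q ''
        ({z | (∑ i, a i * z i) = b} ∩ {z | evalP q z ≠ 0})) ≤ N - 1 := by
  intro a ha b
  obtain ⟨c, c₀, hcne, hrel⟩ := hyperplane_relation p q hsph hq a ha b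
  by_cases hc : c = 0
  · have hc₀ : c₀ ≠ 0 := fun h => hcne ⟨hc, h⟩
    have hempty : ({z : EuclideanSpace ℂ (Fin n) | (∑ i, a i * z i) = b} ∩
        {z | evalP q z ≠ 0}) = ∅ := by
      rw [Set.eq_empty_iff_forall_notMem]
      rintro z ⟨hz1, hz2⟩
      apply hz2
      have hrelz := hrel z hz1
      rw [hc] at hrelz
      simp only [Pi.zero_apply, zero_mul, Finset.sum_const_zero] at hrelz
      have : MvPolynomial.eval (fun i => z i) q = 0 := by
        have := hrelz.symm
        rcases mul_eq_zero.mp this with h | h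
        · exact absurd h hc₀
        · exact h
      exact this
    rw [hempty, Set.image_empty]
    have : affDim (∅ : Set (EuclideanSpace ℂ (Fin N))) = 0 := by
      unfold affDim
      rw [AffineSubspace.span_empty, AffineSubspace.direction_bot, finrank_bot]
    rw [this]
    exact Nat.zero_le _
  · apply affDim_le_of_linear c hc c₀
    rintro u ⟨z, ⟨hz1, hz2⟩, rfl⟩
    have hq0 : evalP q z ≠ 0 := hz2
    have hrelz := hrel z hz1
    show (∑ j, c j * ratMap p q z j) = c₀
    unfold ratMap
    have e : ∀ j, c j * (evalP (p j) z / evalP q z) =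
        (c j * evalP (p j) z) / evalP q z := fun j => by ring
    rw [Finset.sum_congr rfl fun j _ => e j, ← Finset.sum_div]
    have hev : ∀ j, evalP (p j) z = MvPolynomial.eval (fun i => z i) (p j) := fun j => rfl
    rw [show (∑ j, c j * evalP (p j) z) = c₀ * MvPolynomial.eval (fun i => z i) q from hrelz]
    show c₀ * MvPolynomial.eval (fun i => z i) q / evalP q z = c₀
    exact mul_div_cancel_right₀ c₀ hq0
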